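/- arXiv:1909.02054 — 2 statements merged into one kernel-verified Lean document; each statement's English description precedes it below -/
import Mathlib

section
/- For probability measures μ, ν on ℝ with finite second moments, W₂(μ,ν)² = ∫_0^1 |X_μ(m) - X_ν(m)|² dm, where X_μ and X_ν are the inverse cumulative distribution functions of μ and ν. -/
open MeasureTheory Set
open scoped ENNReal

/-- Squared Wasserstein-2 distance on ℝ, defined via couplings. -/
noncomputable def W2sq (μ ν : Measure ℝ) : ℝ≥0∞ :=
  ⨅ γ ∈ {γ : Measure (ℝ × ℝ) | γ.map Prod.fst = μ ∧ γ.map Prod.snd = ν},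
    ∫⁻ p, ENNReal.ofReal ((p.1 - p.2) ^ 2) ∂γ

/-- Inverse cumulative distribution function `X m = inf {x | μ((-∞,x]) > m}`. -/
noncomputable def icdf (μ : Measure ℝ) (m : ℝ) : ℝ :=
  sInf {x : ℝ | m < (μ (Iic x)).toReal}

/-! The cost `(x - y) ^ 2` is twice the area of the triangle `y < s < t ≤ x` (or
`x < s < t ≤ y`). By Tonelli, the cost of a coupling `γ` of `μ` and `ν`, with coordinates
`(X, Y)`, is therefore
`2 ∫∫_{s < t} (γ {Y < s, t ≤ X} + γ {X < s, t ≤ Y}) ds dt`. Every coupling satisfies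
`γ {Y < s, t ≤ X} ≥ ν (Iio s) - μ (Iio t)`, and the quantile coupling `m ↦ (X_μ m, X_ν m)`,
`m` uniform on `(0, 1)`, attains this bound for all `s, t` because
`X_μ m < t ↔ m < μ (Iio t)`. -/

open ProbabilityTheory Filter Topology

section Quantile

variable {μ : Measure ℝ} [IsProbabilityMeasure μ] {m t : ℝ}

lemma nonempty_setOf_lt_measureReal_Iic (hm : m < 1) :
    {x : ℝ | m < μ.real (Iic x)}.Nonempty := by
  obtain ⟨x, hx⟩ := ((tendsto_cdf_atTop μ).eventually_const_lt hm).exists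
  exact ⟨x, by rwa [cdf_eq_real] at hx⟩

lemma bddBelow_setOf_lt_measureReal_Iic (hm : 0 < m) :
    BddBelow {x : ℝ | m < μ.real (Iic x)} := by
  obtain ⟨x₀, hx₀⟩ := eventually_atBot.mp ((tendsto_cdf_atBot μ).eventually_lt_const hm)
  refine ⟨x₀, fun x hx => le_of_not_gt fun hlt => ?_⟩
  have hx' := hx₀ x hlt.le
  rw [cdf_eq_real] at hx'
  exact hx.not_gt hx'

lemma icdf_lt_iff (hm : m ∈ Ioo 0 1) : icdf μ m < t ↔ m < μ.real (Iio t) := by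
  constructor
  · intro h
    obtain ⟨x, hx, hxt⟩ := exists_lt_of_csInf_lt (nonempty_setOf_lt_measureReal_Iic hm.2) h
    exact hx.trans_le (measureReal_mono (Iic_subset_Iio.2 hxt))
  · intro h
    obtain ⟨u, hu_mono, hut, hu⟩ := exists_seq_strictMono_tendsto t
    have hlim : Tendsto (fun n => μ.real (Iic (u n))) atTop (𝓝 (μ.real (Iio t))) := by
      rw [← iUnion_Iic_eq_Iio_of_lt_of_tendsto hut hu]
      exact (ENNReal.tendsto_toReal (measure_ne_top _ _)).comp
        (tendsto_measure_iUnion_atTop (monotone_Iic.comp hu_mono.monotone))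
    obtain ⟨n, hn⟩ := (hlim.eventually_const_lt h).exists
    exact (csInf_le (bddBelow_setOf_lt_measureReal_Iic hm.1) hn).trans_lt (hut n)

lemma monotoneOn_icdf : MonotoneOn (icdf μ) (Ioo 0 1) := fun _ ha _ hb hab =>
  csInf_le_csInf (bddBelow_setOf_lt_measureReal_Iic ha.1)
    (nonempty_setOf_lt_measureReal_Iic hb.2) fun _ hx => hab.trans_lt hx

lemma aemeasurable_icdf : AEMeasurable (icdf μ) (volume.restrict (Ioo 0 1)) :=
  aemeasurable_restrict_of_monotoneOn measurableSet_Ioo monotoneOn_icdf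

lemma preimage_icdf_Iio_inter_Ioo (t : ℝ) :
    icdf μ ⁻¹' Iio t ∩ Ioo 0 1 = Ioo 0 (μ.real (Iio t)) := by
  ext m
  constructor
  · rintro ⟨hmt, hm⟩
    exact ⟨hm.1, (icdf_lt_iff hm).1 hmt⟩
  · rintro ⟨hm0, hmt⟩
    have hm : m ∈ Ioo 0 1 := ⟨hm0, hmt.trans_le measureReal_le_one⟩
    exact ⟨(icdf_lt_iff hm).2 hmt, hm⟩

lemma map_icdf : (volume.restrict (Ioo 0 1)).map (icdf μ) = μ := by
  refine (ext_of_generate_finite _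
    (BorelSpace.measurable_eq.trans (borel_eq_generateFrom_Iio ℝ)) isPiSystem_Iio ?_ ?_).symm
  · rintro _ ⟨t, rfl⟩
    rw [Measure.map_apply_of_aemeasurable aemeasurable_icdf measurableSet_Iio,
      Measure.restrict_apply' measurableSet_Ioo, preimage_icdf_Iio_inter_Ioo, Real.volume_Ioo,
      sub_zero, ofReal_measureReal]
  · rw [Measure.map_apply_of_aemeasurable aemeasurable_icdf MeasurableSet.univ, preimage_univ,
      Measure.restrict_apply_univ, Real.volume_Ioo, measure_univ]
    norm_num

end Quantile

lemma Real.volume_eq_of_Ioo_subset_of_subset_Icc {s : Set ℝ} {a b : ℝ} (h₁ : Ioo a b ⊆ s)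
    (h₂ : s ⊆ Icc a b) : volume s = ENNReal.ofReal (b - a) :=
  le_antisymm (Real.volume_Icc ▸ measure_mono h₂) (Real.volume_Ioo ▸ measure_mono h₁)

lemma measure_Iio_sub_measure_Iio_le {μ ν : Measure ℝ} {γ : Measure (ℝ × ℝ)}
    (h₁ : γ.map Prod.fst = μ) (h₂ : γ.map Prod.snd = ν) (s t : ℝ) :
    ν (Iio s) - μ (Iio t) ≤ γ {p | p.2 < s ∧ t ≤ p.1} := by
  rw [← h₁, ← h₂, Measure.map_apply measurable_snd measurableSet_Iio,
    Measure.map_apply measurable_fst measurableSet_Iio]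
  convert le_measure_sdiff (μ := γ) using 2
  ext p
  simp [not_lt]

lemma MeasureTheory.Measure.isProbabilityMeasure_of_map_eq {α β : Type*} [MeasurableSpace α]
    [MeasurableSpace β] {μ : Measure α} {ν : Measure β} [IsProbabilityMeasure ν] {f : α → β}
    (h : μ.map f = ν) : IsProbabilityMeasure μ :=
  have : IsProbabilityMeasure (μ.map f) := h ▸ inferInstance
  Measure.isProbabilityMeasure_of_map f

noncomputable def quantileCoupling (μ ν : Measure ℝ) : Measure (ℝ × ℝ) :=
  (volume.restrict (Ioo 0 1)).map fun m => (icdf μ m, icdf ν m)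

section QuantileCoupling

variable {μ ν : Measure ℝ} [IsProbabilityMeasure μ] [IsProbabilityMeasure ν]

lemma aemeasurable_icdf_prod_icdf :
    AEMeasurable (fun m => (icdf μ m, icdf ν m)) (volume.restrict (Ioo 0 1)) :=
  aemeasurable_icdf.prodMk aemeasurable_icdf

lemma quantileCoupling_map_fst : (quantileCoupling μ ν).map Prod.fst = μ := by
  rw [quantileCoupling, AEMeasurable.map_map_of_aemeasurable measurable_fst.aemeasurable
    aemeasurable_icdf_prod_icdf]
  exact map_icdf

lemma quantileCoupling_map_snd : (quantileCoupling μ ν).map Prod.snd = ν := by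
  rw [quantileCoupling, AEMeasurable.map_map_of_aemeasurable measurable_snd.aemeasurable
    aemeasurable_icdf_prod_icdf]
  exact map_icdf

instance : IsProbabilityMeasure (quantileCoupling μ ν) :=
  Measure.isProbabilityMeasure_of_map_eq quantileCoupling_map_fst

lemma quantileCoupling_map_swap :
    (quantileCoupling μ ν).map Prod.swap = quantileCoupling ν μ := by
  rw [quantileCoupling, AEMeasurable.map_map_of_aemeasurable measurable_swap.aemeasurable
    aemeasurable_icdf_prod_icdf]
  rfl

lemma quantileCoupling_apply (s t : ℝ) :
    quantileCoupling μ ν {p | p.2 < s ∧ t ≤ p.1} = ν (Iio s) - μ (Iio t) := by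
  have hs : MeasurableSet {p : ℝ × ℝ | p.2 < s ∧ t ≤ p.1} :=
    (measurableSet_lt measurable_snd measurable_const).inter
      (measurableSet_le measurable_const measurable_fst)
  rw [quantileCoupling, Measure.map_apply_of_aemeasurable aemeasurable_icdf_prod_icdf hs,
    Measure.restrict_apply' measurableSet_Ioo, ← ofReal_measureReal (s := Iio s),
    ← ofReal_measureReal (s := Iio t), ← ENNReal.ofReal_sub _ measureReal_nonneg]
  refine Real.volume_eq_of_Ioo_subset_of_subset_Icc (fun m hm => ?_) ?_
  · have hm' : m ∈ Ioo 0 1 :=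
      ⟨measureReal_nonneg.trans_lt hm.1, hm.2.trans_le measureReal_le_one⟩
    exact ⟨⟨(icdf_lt_iff hm').2 hm.2,
      le_of_not_gt fun h => hm.1.not_gt ((icdf_lt_iff hm').1 h)⟩, hm'⟩
  · rintro m ⟨⟨hms, htm⟩, hm⟩
    exact ⟨le_of_not_gt fun h => htm.not_gt ((icdf_lt_iff hm).2 h), ((icdf_lt_iff hm).1 hms).le⟩

lemma lintegral_sq_sub_quantileCoupling :
    ∫⁻ p, ENNReal.ofReal ((p.1 - p.2) ^ 2) ∂quantileCoupling μ ν
      = ∫⁻ m in Icc 0 1, ENNReal.ofReal ((icdf μ m - icdf ν m) ^ 2) := by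
  rw [quantileCoupling, lintegral_map' (by fun_prop) aemeasurable_icdf_prod_icdf,
    Measure.restrict_congr_set Ioo_ae_eq_Icc]

end QuantileCoupling

def triangle (a b : ℝ) : Set (ℝ × ℝ) := {q | q.1 ∈ Ioc a b ∧ q.2 ∈ Ioc q.1 b}

lemma measurableSet_setOf_mem_triangle {α : Type*} [MeasurableSpace α] {a b s t : α → ℝ}
    (ha : Measurable a) (hb : Measurable b) (hs : Measurable s) (ht : Measurable t) :
    MeasurableSet {x | (s x, t x) ∈ triangle (a x) (b x)} :=
  ((measurableSet_lt ha hs).inter (measurableSet_le hs hb)).inter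
    ((measurableSet_lt hs ht).inter (measurableSet_le ht hb))

lemma measurableSet_triangle (a b : ℝ) : MeasurableSet (triangle a b) :=
  measurableSet_setOf_mem_triangle measurable_const measurable_const measurable_fst measurable_snd

lemma volume_triangle (a b : ℝ) :
    volume (triangle a b) = ENNReal.ofReal (∫ s in Ioc a b, (b - s)) := by
  have hslice (s : ℝ) :
      volume (Prod.mk s ⁻¹' triangle a b)
        = (Ioc a b).indicator (fun s => ENNReal.ofReal (b - s)) s := by
    by_cases hs : s ∈ Ioc a b
    · rw [indicator_of_mem hs, ← Real.volume_Ioc]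
      exact congrArg volume (ext fun t => and_iff_right hs)
    · rw [indicator_of_notMem hs, show Prod.mk s ⁻¹' triangle a b = ∅ from
        eq_empty_of_forall_notMem fun t ht => hs ht.1, measure_empty]
  rw [Measure.volume_eq_prod, Measure.prod_apply (measurableSet_triangle a b), funext hslice,
    lintegral_indicator measurableSet_Ioc, ofReal_integral_eq_lintegral_ofReal]
  · exact (continuous_const.sub continuous_id).integrableOn_Ioc
  · exact (ae_restrict_iff' measurableSet_Ioc).2 (.of_forall fun s hs => sub_nonneg.2 hs.2)

lemma two_mul_volume_triangle {a b : ℝ} (h : a ≤ b) :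
    2 * volume (triangle a b) = ENNReal.ofReal ((b - a) ^ 2) := by
  rw [volume_triangle, ← intervalIntegral.integral_of_le h,
    intervalIntegral.integral_comp_sub_left (fun x => x), integral_id, ← ENNReal.ofReal_ofNat 2,
    ← ENNReal.ofReal_mul zero_le_two]
  congr 1
  ring

lemma volume_triangle_of_le {a b : ℝ} (h : b ≤ a) : volume (triangle a b) = 0 := by
  simp [volume_triangle, Ioc_eq_empty_of_le h]

lemma ofReal_sq_sub_eq_volume_triangle (x y : ℝ) :
    ENNReal.ofReal ((x - y) ^ 2) = 2 * (volume (triangle y x) + volume (triangle x y)) := by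
  rcases le_total y x with h | h
  · rw [volume_triangle_of_le h, add_zero, two_mul_volume_triangle h]
  · rw [volume_triangle_of_le h, zero_add, two_mul_volume_triangle h, ← neg_sub, neg_sq]

lemma measurableSet_setOf_snd_mem_triangle :
    MeasurableSet {r : (ℝ × ℝ) × (ℝ × ℝ) | r.2 ∈ triangle r.1.2 r.1.1} :=
  measurableSet_setOf_mem_triangle (by fun_prop) (by fun_prop) (by fun_prop) (by fun_prop)

lemma measurable_volume_triangle : Measurable fun p : ℝ × ℝ => volume (triangle p.2 p.1) :=
  measurable_measure_prodMk_left measurableSet_setOf_snd_mem_triangle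

lemma lintegral_volume_triangle (γ : Measure (ℝ × ℝ)) [SFinite γ] :
    ∫⁻ p, volume (triangle p.2 p.1) ∂γ
      = ∫⁻ q in {q : ℝ × ℝ | q.1 < q.2}, γ {p | p.2 < q.1 ∧ q.2 ≤ p.1} := by
  have hU := measurableSet_setOf_snd_mem_triangle
  calc ∫⁻ p, volume (triangle p.2 p.1) ∂γ
      = γ.prod volume {r : (ℝ × ℝ) × (ℝ × ℝ) | r.2 ∈ triangle r.1.2 r.1.1} :=
        (Measure.prod_apply hU).symm
    _ = ∫⁻ q, γ {p | q ∈ triangle p.2 p.1} := Measure.prod_apply_symm hU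
    _ = ∫⁻ q, {q : ℝ × ℝ | q.1 < q.2}.indicator
          (fun q => γ {p | p.2 < q.1 ∧ q.2 ≤ p.1}) q := by
        refine lintegral_congr fun q => ?_
        by_cases hq : q.1 < q.2
        · rw [indicator_of_mem (s := {q : ℝ × ℝ | q.1 < q.2}) hq]
          congr 1
          ext p
          simp only [triangle, mem_Ioc, mem_ofPred_eq, hq, true_and]
          exact ⟨fun h => ⟨h.1.1, h.2⟩, fun h => ⟨⟨h.1, hq.le.trans h.2⟩, h.2⟩⟩
        · rw [indicator_of_notMem (s := {q : ℝ × ℝ | q.1 < q.2}) hq]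
          simp [triangle, hq]
    _ = _ := lintegral_indicator (measurableSet_lt measurable_fst measurable_snd) _

lemma lintegral_ofReal_sq_sub_eq (γ : Measure (ℝ × ℝ)) :
    ∫⁻ p, ENNReal.ofReal ((p.1 - p.2) ^ 2) ∂γ
      = 2 * (∫⁻ p, volume (triangle p.2 p.1) ∂γ
        + ∫⁻ p, volume (triangle p.2 p.1) ∂γ.map Prod.swap) := by
  rw [lintegral_map measurable_volume_triangle measurable_swap,
    ← lintegral_add_left measurable_volume_triangle,
    ← lintegral_const_mul' _ _ ENNReal.ofNat_ne_top]
  exact lintegral_congr fun p => ofReal_sq_sub_eq_volume_triangle p.1 p.2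

lemma lintegral_volume_triangle_quantileCoupling_le {μ ν : Measure ℝ} [IsProbabilityMeasure μ]
    [IsProbabilityMeasure ν] {γ : Measure (ℝ × ℝ)} [SFinite γ] (h₁ : γ.map Prod.fst = μ)
    (h₂ : γ.map Prod.snd = ν) :
    ∫⁻ p, volume (triangle p.2 p.1) ∂quantileCoupling μ ν
      ≤ ∫⁻ p, volume (triangle p.2 p.1) ∂γ := by
  rw [lintegral_volume_triangle, lintegral_volume_triangle]
  exact lintegral_mono fun q => (quantileCoupling_apply q.1 q.2).trans_le
    (measure_Iio_sub_measure_Iio_le h₁ h₂ q.1 q.2)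

theorem W2sq_eq_icdf_integral_general (μ ν : Measure ℝ)
    [IsProbabilityMeasure μ] [IsProbabilityMeasure ν] :
    W2sq μ ν = ∫⁻ m in Icc (0:ℝ) 1, ENNReal.ofReal ((icdf μ m - icdf ν m) ^ 2) := by
  rw [W2sq, ← lintegral_sq_sub_quantileCoupling]
  refine le_antisymm (iInf₂_le _ ⟨quantileCoupling_map_fst, quantileCoupling_map_snd⟩)
    (le_iInf₂ fun γ ⟨h₁, h₂⟩ => ?_)
  have : IsProbabilityMeasure γ := Measure.isProbabilityMeasure_of_map_eq h₁
  have h₁' : (γ.map Prod.swap).map Prod.fst = ν := Measure.fst_map_swap.trans h₂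
  have h₂' : (γ.map Prod.swap).map Prod.snd = μ := Measure.snd_map_swap.trans h₁
  rw [lintegral_ofReal_sq_sub_eq, lintegral_ofReal_sq_sub_eq, quantileCoupling_map_swap]
  gcongr 2 * (?_ + ?_)
  · exact lintegral_volume_triangle_quantileCoupling_le h₁ h₂
  · exact lintegral_volume_triangle_quantileCoupling_le h₁' h₂'

/-- For probability measures μ, ν on ℝ with finite second moments,
`W₂(μ,ν)² = ∫_0^1 |X_μ(m) - X_ν(m)|² dm` where `X_μ, X_ν` are the icdfs. -/
theorem W2sq_eq_icdf_integral (μ ν : Measure ℝ)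
    [IsProbabilityMeasure μ] [IsProbabilityMeasure ν]
    (hμ : ∫⁻ x, ENNReal.ofReal (x ^ 2) ∂μ < ⊤)
    (hν : ∫⁻ x, ENNReal.ofReal (x ^ 2) ∂ν < ⊤) :
    W2sq μ ν = ∫⁻ m in Icc (0:ℝ) 1, ENNReal.ofReal ((icdf μ m - icdf ν m) ^ 2) :=
  W2sq_eq_icdf_integral_general μ ν
end

section
/- Quantitative Pólya lemma: Let ν be a Lebesgue-absolutely-continuous probability measure on ℝ with CDF F. Then there exists a non-decreasing function ω : [0,∞) → [0,∞) with ω(s) → 0 as s → 0⁺, such that for every probability measure ν̄ on ℝ with CDF F̄, sup_{x∈ℝ} |F(x) - F̄(x)| ≤ ω(d_BL(ν, ν̄)). -/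
/-!
A ramp falling linearly from `1` to `0` on `[x, x + δ]` is bounded by `1`, is `δ⁻¹`-Lipschitz, and
lies between the indicators of `(-∞, x)` and `(-∞, x + δ)`. Testing `d_BL` against it (rescaled
by `(1 + δ⁻¹)⁻¹`) gives `F̄(x) ≤ F(x + δ) + (1 + δ⁻¹) d_BL(ν, ν̄)` and
`F(x - δ) ≤ F̄(x) + (1 + δ⁻¹) d_BL(ν, ν̄)`, hence for every `δ > 0`
`sup |F - F̄| ≤ sup_x (F(x + δ) - F(x)) + (1 + δ⁻¹) d_BL(ν, ν̄)`.
Absolute continuity makes the first term small, so the optimal modulus (the largest Kolmogorov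
distance from `ν` to probability measures within `d_BL`-distance `s`) tends to `0` as `s → 0⁺`.
-/

open MeasureTheory Set

/-- Dual bounded-Lipschitz distance:
`d_BL(μ,ν) = sup { ∫ f d(μ-ν) : ‖f‖_∞ + Lip f ≤ 1 }`. -/
noncomputable def dBL (μ ν : Measure ℝ) : ℝ :=
  sSup {r : ℝ | ∃ f : ℝ → ℝ, (∃ C K : ℝ, (∀ x, |f x| ≤ C) ∧
      (∀ x y, |f x - f y| ≤ K * |x - y|) ∧ C + K ≤ 1) ∧
    r = (∫ x, f x ∂μ) - ∫ x, f x ∂ν}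

open Filter Topology
open scoped NNReal ENNReal

section BoundedLipschitz

variable {μ ν : Measure ℝ}

lemma dBL_self (μ : Measure ℝ) : dBL μ μ = 0 := by
  refine (congrArg sSup ?_).trans (csSup_singleton (0 : ℝ))
  ext r
  simp only [sub_self, mem_ofPred_eq, mem_singleton_iff]
  constructor
  · rintro ⟨-, -, rfl⟩
    rfl
  · rintro rfl
    exact ⟨0, ⟨0, 0, by simp, by simp, by norm_num⟩, rfl⟩

lemma integral_sub_integral_le_dBL [IsFiniteMeasure μ] [IsFiniteMeasure ν] {f : ℝ → ℝ}
    {C : ℝ} {K : ℝ≥0} (hC : ∀ x, |f x| ≤ C) (hK : LipschitzWith K f) (hCK : C + K ≤ 1) :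
    ∫ x, f x ∂μ - ∫ x, f x ∂ν ≤ dBL μ ν := by
  have hbdd : ∀ (ρ : Measure ℝ) [IsFiniteMeasure ρ] (g : ℝ → ℝ) (D : ℝ), D ≤ 1 →
      (∀ x, |g x| ≤ D) → |∫ x, g x ∂ρ| ≤ ρ.real univ := fun ρ _ g D hD hg =>
    calc |∫ x, g x ∂ρ| ≤ D * ρ.real univ :=
          norm_integral_le_of_norm_le_const (f := g) (Eventually.of_forall hg)
      _ ≤ ρ.real univ := mul_le_of_le_one_left measureReal_nonneg hD
  refine le_csSup ⟨μ.real univ + ν.real univ, ?_⟩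
    ⟨f, ⟨C, K, hC, fun x y => by simpa [Real.dist_eq] using hK.dist_le_mul x y, hCK⟩, rfl⟩
  rintro _ ⟨g, ⟨D, L, hg, hL, hDL⟩, rfl⟩
  have hL0 : 0 ≤ L := by simpa using (abs_nonneg _).trans (hL 1 0)
  have hμ := hbdd μ g D (by linarith) hg
  have hν := hbdd ν g D (by linarith) hg
  linarith [le_abs_self (∫ x, g x ∂μ), neg_abs_le (∫ x, g x ∂ν)]

lemma abs_integral_sub_integral_le_dBL [IsFiniteMeasure μ] [IsFiniteMeasure ν] {f : ℝ → ℝ}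
    {C : ℝ} {K : ℝ≥0} (hC : ∀ x, |f x| ≤ C) (hK : LipschitzWith K f) (hCK : C + K ≤ 1) :
    |∫ x, f x ∂μ - ∫ x, f x ∂ν| ≤ dBL μ ν := by
  have hneg := integral_sub_integral_le_dBL (μ := μ) (ν := ν) (f := fun x => -f x)
    (by simpa using hC) hK.neg hCK
  rw [integral_neg, integral_neg] at hneg
  exact abs_le.2 ⟨by linarith, integral_sub_integral_le_dBL hC hK hCK⟩

/-- Rescaling by `(1 + K)⁻¹` makes a `1`-bounded `K`-Lipschitz function admissible for `dBL`. -/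
lemma abs_integral_sub_integral_le_mul_dBL [IsFiniteMeasure μ] [IsFiniteMeasure ν]
    {f : ℝ → ℝ} {K : ℝ≥0} (hf : ∀ x, |f x| ≤ 1) (hK : LipschitzWith K f) :
    |∫ x, f x ∂μ - ∫ x, f x ∂ν| ≤ (1 + K) * dBL μ ν := by
  set c : ℝ := (1 + K)⁻¹ with hc
  have hc0 : 0 < c := by positivity
  have hcf : ∀ x, |c * f x| ≤ c := fun x => by
    rw [abs_mul, abs_of_pos hc0]
    exact mul_le_of_le_one_right hc0.le (hf x)
  have hcK : LipschitzWith (‖c‖₊ * K) fun x => c * f x := (lipschitzWith_smul c).comp hK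
  have hsum : c + ((‖c‖₊ * K : ℝ≥0) : ℝ) = 1 := by
    rw [NNReal.coe_mul, coe_nnnorm, Real.norm_of_nonneg hc0.le, hc]
    field_simp
  have := abs_integral_sub_integral_le_dBL (μ := μ) (ν := ν) hcf hcK hsum.le
  rw [integral_const_mul, integral_const_mul, ← mul_sub, abs_mul, abs_of_pos hc0] at this
  rwa [hc, inv_mul_le_iff₀ (by positivity)] at this

end BoundedLipschitz

section Ramp

noncomputable def ramp (x δ t : ℝ) : ℝ := max 0 (min 1 ((x + δ - t) / δ))

variable {x δ : ℝ}

lemma abs_ramp_le_one (t : ℝ) : |ramp x δ t| ≤ 1 := by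
  rw [ramp, abs_of_nonneg (le_max_left _ _)]
  exact max_le zero_le_one (min_le_left _ _)

lemma lipschitzWith_ramp (hδ : 0 < δ) : LipschitzWith (Real.toNNReal δ⁻¹) (ramp x δ) := by
  refine (LipschitzWith.of_dist_le_mul fun s t => ?_).const_min 1 |>.const_max 0
  rw [Real.coe_toNNReal _ (inv_nonneg.2 hδ.le), Real.dist_eq, Real.dist_eq, div_sub_div_same,
    sub_sub_sub_cancel_left, abs_div, abs_of_pos hδ, abs_sub_comm, div_eq_inv_mul]

lemma indicator_Iio_le_ramp (hδ : 0 < δ) (t : ℝ) : (Iio x).indicator 1 t ≤ ramp x δ t := by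
  by_cases ht : t < x
  · have : 1 ≤ (x + δ - t) / δ := (one_le_div hδ).2 (by linarith)
    simp [indicator_of_mem (mem_Iio.2 ht), ramp, min_eq_left this]
  · simp [indicator_of_notMem (notMem_Iio.2 (not_lt.1 ht)), ramp]

lemma ramp_le_indicator_Iio (hδ : 0 < δ) (t : ℝ) :
    ramp x δ t ≤ (Iio (x + δ)).indicator 1 t := by
  by_cases ht : t < x + δ
  · simpa [indicator_of_mem (mem_Iio.2 ht)] using (abs_le.1 (abs_ramp_le_one t)).2
  · have : (x + δ - t) / δ ≤ 0 := div_nonpos_of_nonpos_of_nonneg (by linarith) hδ.le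
    simp [indicator_of_notMem (notMem_Iio.2 (not_lt.1 ht)), ramp, this]

end Ramp

section Estimate

variable {μ ν : Measure ℝ} [IsFiniteMeasure μ] {x δ : ℝ}

lemma integrable_ramp (hδ : 0 < δ) : Integrable (ramp x δ) μ :=
  .of_bound (lipschitzWith_ramp hδ).continuous.aestronglyMeasurable 1
    (Eventually.of_forall abs_ramp_le_one)

lemma measureReal_Iio_le_integral_ramp (hδ : 0 < δ) : μ.real (Iio x) ≤ ∫ t, ramp x δ t ∂μ := by
  rw [← integral_indicator_one measurableSet_Iio]
  exact integral_mono ((integrable_const 1).indicator measurableSet_Iio) (integrable_ramp hδ)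
    (indicator_Iio_le_ramp hδ)

lemma integral_ramp_le_measureReal_Iio (hδ : 0 < δ) :
    ∫ t, ramp x δ t ∂μ ≤ μ.real (Iio (x + δ)) := by
  rw [← integral_indicator_one measurableSet_Iio]
  exact integral_mono (integrable_ramp hδ) ((integrable_const 1).indicator measurableSet_Iio)
    (ramp_le_indicator_Iio hδ)

lemma abs_measureReal_Iio_sub_le_add_mul_dBL [IsFiniteMeasure ν] {ε : ℝ} (hδ : 0 < δ)
    (hμ : ∀ y, μ.real (Iio (y + δ)) ≤ μ.real (Iio y) + ε) (x : ℝ) :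
    |μ.real (Iio x) - ν.real (Iio x)| ≤ ε + (1 + δ⁻¹) * dBL μ ν := by
  have hramp (y : ℝ) : |∫ t, ramp y δ t ∂μ - ∫ t, ramp y δ t ∂ν| ≤ (1 + δ⁻¹) * dBL μ ν := by
    simpa [Real.coe_toNNReal _ (inv_nonneg.2 hδ.le)] using
      abs_integral_sub_integral_le_mul_dBL abs_ramp_le_one (lipschitzWith_ramp (x := y) hδ)
  refine abs_sub_le_iff.2 ⟨?_, ?_⟩
  · have hμx := hμ (x - δ)
    have hνx := integral_ramp_le_measureReal_Iio (μ := ν) (x := x - δ) hδ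
    rw [sub_add_cancel] at hμx hνx
    linarith [measureReal_Iio_le_integral_ramp (μ := μ) (x := x - δ) hδ,
      (abs_le.1 (hramp (x - δ))).2]
  · linarith [hμ x, measureReal_Iio_le_integral_ramp (μ := ν) (x := x) hδ,
      integral_ramp_le_measureReal_Iio (μ := μ) (x := x) hδ, (abs_le.1 (hramp x)).1]

end Estimate

lemma MeasureTheory.Measure.AbsolutelyContinuous.exists_pos_forall_measure_lt {α : Type*}
    [MeasurableSpace α] {μ ν : Measure α} [IsFiniteMeasure ν] [ν.HaveLebesgueDecomposition μ]
    (hνμ : ν ≪ μ) {ε : ℝ≥0∞} (hε : ε ≠ 0) :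
    ∃ η > 0, ∀ s, MeasurableSet s → μ s < η → ν s < ε := by
  have hfin : ∫⁻ x, ν.rnDeriv μ x ∂μ ≠ ∞ := by
    rw [Measure.lintegral_rnDeriv hνμ]
    exact measure_ne_top ν univ
  obtain ⟨η, hη, hint⟩ := exists_pos_setLIntegral_lt_of_measure_lt hfin hε
  exact ⟨η, hη, fun s hs hμs => Measure.setLIntegral_rnDeriv' hνμ hs ▸ hint s hμs⟩

lemma exists_pos_forall_measureReal_Iio_add_le {ν : Measure ℝ} [IsFiniteMeasure ν]
    (hν : ν ≪ volume) {ε : ℝ} (hε : 0 < ε) :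
    ∃ δ > 0, ∀ x, ν.real (Iio (x + δ)) ≤ ν.real (Iio x) + ε := by
  obtain ⟨η, hη, hνη⟩ := hν.exists_pos_forall_measure_lt (ENNReal.ofReal_pos.2 hε).ne'
  obtain ⟨δ, -, hδ, hδη⟩ := ENNReal.lt_iff_exists_real_btwn.1 hη
  refine ⟨δ, ENNReal.ofReal_pos.1 hδ, fun x => ?_⟩
  have hIco : ν.real (Ico x (x + δ)) ≤ ε := by
    refine ENNReal.toReal_le_of_le_ofReal hε.le (hνη _ measurableSet_Ico ?_).le
    rwa [Real.volume_Ico, add_sub_cancel_left]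
  calc ν.real (Iio (x + δ)) = ν.real (Iio x ∪ Ico x (x + δ)) := by
        rw [Iio_union_Ico_eq_Iio (le_add_of_nonneg_right (ENNReal.ofReal_pos.1 hδ).le)]
    _ ≤ ν.real (Iio x) + ε := (measureReal_union_le _ _).trans (by gcongr)

noncomputable def cdfDeviations (ν : Measure ℝ) (s : ℝ) : Set ℝ :=
  {r | ∃ ν' : Measure ℝ, IsProbabilityMeasure ν' ∧ dBL ν ν' ≤ s ∧
    ∃ x, r = |ν.real (Iio x) - ν'.real (Iio x)|}

noncomputable def cdfModulus (ν : Measure ℝ) (s : ℝ) : ℝ := sSup (cdfDeviations ν s)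

section cdfModulus

variable {ν : Measure ℝ} [IsProbabilityMeasure ν]

lemma bddAbove_cdfDeviations (s : ℝ) : BddAbove (cdfDeviations ν s) := by
  refine ⟨1, ?_⟩
  rintro _ ⟨ν', _, -, x, rfl⟩
  exact abs_sub_le_of_nonneg_of_le measureReal_nonneg measureReal_le_one measureReal_nonneg
    measureReal_le_one

lemma zero_mem_cdfDeviations {s : ℝ} (hs : 0 ≤ s) : 0 ∈ cdfDeviations ν s :=
  ⟨ν, inferInstance, (dBL_self ν).trans_le hs, 0, by simp⟩

lemma abs_measureReal_Iio_sub_le_cdfModulus (ν' : Measure ℝ) [IsProbabilityMeasure ν'] (x : ℝ) :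
    |ν.real (Iio x) - ν'.real (Iio x)| ≤ cdfModulus ν (dBL ν ν') :=
  le_csSup (bddAbove_cdfDeviations _) ⟨ν', inferInstance, le_rfl, x, rfl⟩

lemma cdfModulus_nonneg {s : ℝ} (hs : 0 ≤ s) : 0 ≤ cdfModulus ν s :=
  le_csSup (bddAbove_cdfDeviations s) (zero_mem_cdfDeviations hs)

lemma monotoneOn_cdfModulus : MonotoneOn (cdfModulus ν) (Ici 0) := fun _ hs _ _ hst =>
  csSup_le_csSup (bddAbove_cdfDeviations _) ⟨0, zero_mem_cdfDeviations hs⟩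
    fun _ ⟨ν', hν', hd, x, hr⟩ => ⟨ν', hν', hd.trans hst, x, hr⟩

lemma cdfModulus_le {δ ε s : ℝ} (hδ : 0 < δ) (hν : ∀ y, ν.real (Iio (y + δ)) ≤ ν.real (Iio y) + ε)
    (hs : 0 ≤ s) : cdfModulus ν s ≤ ε + (1 + δ⁻¹) * s :=
  csSup_le ⟨0, zero_mem_cdfDeviations hs⟩ fun _ ⟨_, _, hd, x, hr⟩ => hr ▸
    (abs_measureReal_Iio_sub_le_add_mul_dBL hδ hν x).trans (by gcongr)

lemma tendsto_cdfModulus (hν : ν ≪ volume) : Tendsto (cdfModulus ν) (𝓝[>] 0) (𝓝 0) := by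
  refine tendsto_order.2 ⟨fun a ha => eventually_nhdsWithin_of_forall fun s hs =>
    ha.trans_le (cdfModulus_nonneg (le_of_lt hs)), fun a ha => ?_⟩
  obtain ⟨δ, hδ, hνδ⟩ := exists_pos_forall_measureReal_Iio_add_le hν (half_pos ha)
  have hc : 0 < 1 + δ⁻¹ := by positivity
  filter_upwards [Ioo_mem_nhdsGT (div_pos (half_pos ha) hc)] with s hs
  calc cdfModulus ν s ≤ a / 2 + (1 + δ⁻¹) * s := cdfModulus_le hδ hνδ hs.1.le
    _ < a / 2 + (1 + δ⁻¹) * (a / 2 / (1 + δ⁻¹)) := by gcongr; exact hs.2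
    _ = a := by field_simp; ring

end cdfModulus

/-- **Quantitative Pólya lemma.** Let ν be a Lebesgue-absolutely-continuous
probability measure on ℝ with CDF `F x = ν((-∞,x))`. Then there is a non-decreasing
function `ω : [0,∞) → [0,∞)` with `ω(s) → 0` as `s → 0⁺` such that for every probability
measure ν̄, `sup_x |F(x) - F̄(x)| ≤ ω(d_BL(ν,ν̄))`. -/
theorem quantitative_polya (ν : Measure ℝ) [IsProbabilityMeasure ν] (hac : ν ≪ volume) :
    ∃ ω : ℝ → ℝ, MonotoneOn ω (Ici 0) ∧ (∀ s, 0 ≤ s → 0 ≤ ω s) ∧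
      Filter.Tendsto ω (nhdsWithin 0 (Ioi 0)) (nhds 0) ∧
      ∀ ν' : Measure ℝ, IsProbabilityMeasure ν' →
        ∀ x : ℝ, |(ν (Iio x)).toReal - (ν' (Iio x)).toReal| ≤ ω (dBL ν ν') :=
  ⟨cdfModulus ν, monotoneOn_cdfModulus, fun _ => cdfModulus_nonneg, tendsto_cdfModulus hac,
    fun ν' _ => abs_measureReal_Iio_sub_le_cdfModulus ν'⟩
end
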